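/- Let H₀ and V be self-adjoint operators on a finite-dimensional complex Hilbert space. Define η₁(λ) = Tr(E_{H₀}((−∞,λ))) − Tr(E_{H₀+V}((−∞,λ))), i.e., the number of eigenvalues of H₀ below λ minus the number of eigenvalues of H₀+V below λ, counting multiplicities. Then η₁ ∈ L¹(ℝ) and Tr(f(H₀+V) − f(H₀)) = ∫_ℝ f'(λ) η₁(λ) dλ for every continuously differentiable function f : ℝ → ℂ. -/

import Mathlib

/-!
Diagonalize `H₀` and `H₀ + V` in orthonormal eigenbases, with eigenvalues `β i` and `α i` indexed
by the same `Fin (dim H)`. Then `Tr f(A)` is the sum of `f` over the eigenvalues of `A`, and the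
counting function of `A` at `λ` is `#{i | μ i < λ}`. Pairing `β i` with `α i`, the spectral shift
function becomes `∑ i, (1[β i < λ] - 1[α i < λ])`, a finite sum of signed indicators of the
intervals between `β i` and `α i`; hence it is integrable, and by the fundamental theorem of
calculus `∫ f' η₁ = ∑ i, ∫ in β i..α i, f' = ∑ i, (f (α i) - f (β i)) = Tr (f(H₀ + V) - f(H₀))`.
-/

open scoped InnerProductSpace
open MeasureTheory Set

noncomputable section

variable {H : Type*} [NormedAddCommGroup H] [InnerProductSpace ℂ H] [FiniteDimensional ℂ H]

/-- The trace of an operator on a finite-dimensional Hilbert space. -/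
def Trace (A : H →L[ℂ] H) : ℂ := LinearMap.trace ℂ H (A : H →ₗ[ℂ] H)

/-- `f(A)` for a self-adjoint operator `A` and `f : ℝ → ℂ`, via the continuous functional
calculus (the spectrum of `A` is real, so only the values of `f` on `ℝ` matter). -/
def fcSA (f : ℝ → ℂ) (A : H →L[ℂ] H) : H →L[ℂ] H := cfc (fun z : ℂ => f z.re) A

/-- `Tr E_A((-∞,λ))`: the number of eigenvalues of `A` (counting multiplicity) that are
strictly less than `λ`, i.e. the dimension of the span of the corresponding eigenspaces. -/
def countBelow (A : H →L[ℂ] H) (l : ℝ) : ℕ :=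
  Module.finrank ℂ
    ↥(⨆ (μ : ℝ) (_ : μ < l), Module.End.eigenspace (A : H →ₗ[ℂ] H) (μ : ℂ))

open Finset in
def numBelow {ι : Type*} [Fintype ι] (μ : ι → ℝ) (l : ℝ) : ℕ := #{i | μ i < l}

lemma indicator_Ioi_sub_indicator_Ioi {E : Type*} [AddCommGroup E] (g : ℝ → E) (a b : ℝ) :
    (Ioi a).indicator g - (Ioi b).indicator g = (Ioc a b).indicator g - (Ioc b a).indicator g := by
  ext l
  by_cases ha : a < l <;> by_cases hb : b < l <;> simp [*, not_lt.mp]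

section IntervalIndicator

variable {E : Type*} [NormedAddCommGroup E] {g : ℝ → E} {a b : ℝ}

lemma integrable_indicator_Ioi_sub_indicator_Ioi (hg : IntervalIntegrable g volume a b) :
    Integrable ((Ioi a).indicator g - (Ioi b).indicator g) := by
  rw [indicator_Ioi_sub_indicator_Ioi]
  exact (hg.1.integrable_indicator measurableSet_Ioc).sub
    (hg.2.integrable_indicator measurableSet_Ioc)

lemma integral_indicator_Ioi_sub_indicator_Ioi [NormedSpace ℝ E]
    (hg : IntervalIntegrable g volume a b) :
    ∫ l, ((Ioi a).indicator g - (Ioi b).indicator g) l = ∫ l in a..b, g l := by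
  rw [indicator_Ioi_sub_indicator_Ioi, Pi.sub_def, integral_sub
    (hg.1.integrable_indicator measurableSet_Ioc) (hg.2.integrable_indicator measurableSet_Ioc),
    integral_indicator measurableSet_Ioc, integral_indicator measurableSet_Ioc,
    intervalIntegral]

end IntervalIndicator

section NumBelow

variable {ι : Type*} [Fintype ι]

lemma numBelow_sub_numBelow_smul {E : Type*} [AddCommGroup E] [Module ℝ E] (a b : ι → ℝ)
    (g : ℝ → E) (l : ℝ) :
    ((numBelow b l : ℝ) - numBelow a l) • g l
      = ∑ i, ((Ioi (b i)).indicator g - (Ioi (a i)).indicator g) l := by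
  simp only [numBelow, Finset.card_filter, Nat.cast_sum, Nat.cast_ite, Nat.cast_one,
    Nat.cast_zero, ← Finset.sum_sub_distrib, Finset.sum_smul, Pi.sub_apply, indicator_apply,
    mem_Ioi]
  refine Finset.sum_congr rfl fun i _ => ?_
  split_ifs <;> simp

lemma integrable_numBelow_sub_numBelow (a b : ι → ℝ) :
    Integrable fun l => (numBelow b l : ℝ) - numBelow a l := by
  have h : (fun l => (numBelow b l : ℝ) - numBelow a l)
      = fun l => ∑ i, ((Ioi (b i)).indicator 1 - (Ioi (a i)).indicator 1 : ℝ → ℝ) l :=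
    funext fun l => by simpa using numBelow_sub_numBelow_smul a b (1 : ℝ → ℝ) l
  rw [h]
  exact integrable_finsetSum _ fun i _ =>
    integrable_indicator_Ioi_sub_indicator_Ioi intervalIntegrable_const

lemma integral_numBelow_sub_numBelow_smul_deriv {E : Type*} [NormedAddCommGroup E]
    [NormedSpace ℝ E] [CompleteSpace E] {f : ℝ → E} (hf : ContDiff ℝ 1 f) (a b : ι → ℝ) :
    ∫ l, ((numBelow b l : ℝ) - numBelow a l) • deriv f l = ∑ i, (f (a i) - f (b i)) := by
  have hf' : ∀ x y, IntervalIntegrable (deriv f) volume x y := fun x y =>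
    (hf.continuous_deriv le_rfl).intervalIntegrable x y
  simp_rw [numBelow_sub_numBelow_smul]
  rw [integral_finsetSum _ fun i _ => integrable_indicator_Ioi_sub_indicator_Ioi (hf' _ _)]
  refine Finset.sum_congr rfl fun i _ => ?_
  rw [integral_indicator_Ioi_sub_indicator_Ioi (hf' _ _),
    intervalIntegral.integral_deriv_eq_sub (fun x _ => hf.differentiable one_ne_zero x) (hf' _ _)]

end NumBelow

namespace LinearMap.IsSymmetric

open Module Module.End

variable {𝕜 E : Type*} [RCLike 𝕜] [NormedAddCommGroup E] [InnerProductSpace 𝕜 E]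
  [FiniteDimensional 𝕜 E] {T : E →ₗ[𝕜] E} (hT : T.IsSymmetric) {n : ℕ} (hn : finrank 𝕜 E = n)
include hT

lemma eigenvectorBasis_repr_eq_zero {c : 𝕜} {v : E} (hv : v ∈ eigenspace T c) {i : Fin n}
    (hi : (hT.eigenvalues hn i : 𝕜) ≠ c) : (hT.eigenvectorBasis hn).repr v i = 0 := by
  have h := hT.eigenvectorBasis_apply_self_apply hn v i
  rw [mem_eigenspace_iff.mp hv, map_smul, PiLp.smul_apply, smul_eq_mul] at h
  exact (mul_eq_mul_right_iff.mp h.symm).resolve_left hi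

lemma iSup_eigenspace_eq_span_eigenvectorBasis (P : ℝ → Prop) :
    ⨆ (μ : ℝ) (_ : P μ), eigenspace T (μ : 𝕜)
      = Submodule.span 𝕜 (hT.eigenvectorBasis hn '' {i | P (hT.eigenvalues hn i)}) := by
  apply le_antisymm
  · refine iSup₂_le fun μ hμ v hv => ?_
    rw [← (hT.eigenvectorBasis hn).sum_repr v]
    refine Submodule.sum_mem _ fun i _ => ?_
    by_cases hi : hT.eigenvalues hn i = μ
    · have hiP : P (hT.eigenvalues hn i) := hi ▸ hμ
      exact Submodule.smul_mem _ _ (Submodule.subset_span ⟨i, hiP, rfl⟩)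
    · rw [hT.eigenvectorBasis_repr_eq_zero hn hv (mod_cast hi), zero_smul]
      exact Submodule.zero_mem _
  · rw [Submodule.span_le]
    rintro _ ⟨i, hi, rfl⟩
    exact Submodule.mem_iSup_of_mem _ (Submodule.mem_iSup_of_mem hi
      (hT.hasEigenvector_eigenvectorBasis hn i).1)

end LinearMap.IsSymmetric

lemma countBelow_eq_numBelow {A : H →L[ℂ] H} (hA : IsSelfAdjoint A) {n : ℕ}
    (hn : Module.finrank ℂ H = n) (l : ℝ) :
    countBelow A l = numBelow (hA.isSymmetric.eigenvalues hn) l := by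
  let b := hA.isSymmetric.eigenvectorBasis hn
  have hspan : ⨆ (μ : ℝ) (_ : μ < l), Module.End.eigenspace (A : H →ₗ[ℂ] H) (μ : ℂ)
      = Submodule.span ℂ (b '' {i | hA.isSymmetric.eigenvalues hn i < l}) :=
    hA.isSymmetric.iSup_eigenspace_eq_span_eigenvectorBasis hn _
  have hli : LinearIndependent ℂ fun i : {i | hA.isSymmetric.eigenvalues hn i < l} => b i :=
    b.orthonormal.linearIndependent.comp _ Subtype.val_injective
  rw [countBelow, hspan, Set.image_eq_range, finrank_span_eq_card hli, numBelow,
    Fintype.card_subtype]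
  rfl

lemma cfc_apply_of_hasEigenvector {A : H →L[ℂ] H} [IsStarNormal A] {c : ℂ} {v : H}
    (hv : Module.End.HasEigenvector (A : H →ₗ[ℂ] H) c v) (g : ℂ → ℂ) :
    cfc g A v = g c • v := by
  have hspec : spectrum ℂ A = spectrum ℂ (A : H →ₗ[ℂ] H) := ContinuousLinearMap.spectrum_eq
  have hfin : (spectrum ℂ A).Finite := hspec ▸ Module.End.finite_spectrum _
  -- on the finite spectrum, `g` agrees with its Lagrange interpolation polynomial
  let p := Lagrange.interpolate hfin.toFinset id g
  have hp : ∀ z ∈ spectrum ℂ A, p.eval z = g z := fun z hz =>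
    Lagrange.eval_interpolate_at_node g (injOn_id _) (hfin.mem_toFinset.mpr hz)
  have hc : c ∈ spectrum ℂ A := hspec ▸
    Module.End.hasEigenvalue_iff_mem_spectrum.mp (Module.End.hasEigenvalue_of_hasEigenvector hv)
  have haeval : ((Polynomial.aeval A p : H →L[ℂ] H) : H →ₗ[ℂ] H)
      = Polynomial.aeval (A : H →ₗ[ℂ] H) p :=
    (Polynomial.aeval_algHom_apply (Module.End.toContinuousLinearMap H).symm.toAlgHom A p).symm
  calc cfc g A v = Polynomial.aeval A p v := by
        rw [cfc_congr fun z hz => (hp z hz).symm, cfc_polynomial p A]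
    _ = p.eval c • v := by
        rw [← ContinuousLinearMap.coe_coe, haeval, Module.End.aeval_apply_of_hasEigenvector hv]
    _ = g c • v := by rw [hp c hc]

lemma trace_fcSA {A : H →L[ℂ] H} (hA : IsSelfAdjoint A) {n : ℕ} (hn : Module.finrank ℂ H = n)
    (f : ℝ → ℂ) : Trace (fcSA f A) = ∑ i, f (hA.isSymmetric.eigenvalues hn i) := by
  have := hA.isStarNormal
  let b := hA.isSymmetric.eigenvectorBasis hn
  rw [Trace, LinearMap.trace_eq_sum_inner _ b]
  refine Finset.sum_congr rfl fun i _ => ?_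
  rw [ContinuousLinearMap.coe_coe, fcSA,
    cfc_apply_of_hasEigenvector (hA.isSymmetric.hasEigenvector_eigenvectorBasis hn i),
    inner_smul_right, b.inner_eq_one, mul_one]
  exact congrArg f (Complex.ofReal_re _)

/-- **Lifshits–Krein trace formula in finite dimensions.**  For self-adjoint operators
`H₀, V` on a finite-dimensional complex Hilbert space, the spectral shift function
`η₁(λ) = Tr E_{H₀}((-∞,λ)) - Tr E_{H₀+V}((-∞,λ))` is integrable on `ℝ` and
`Tr(f(H₀+V) - f(H₀)) = ∫_ℝ f'(λ) η₁(λ) dλ` for every `C¹` function `f : ℝ → ℂ`. -/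
theorem finite_dimensional_spectral_shift
    (H₀ V : H →L[ℂ] H) (hH₀ : IsSelfAdjoint H₀) (hV : IsSelfAdjoint V) :
    Integrable (fun l : ℝ => (countBelow H₀ l : ℝ) - (countBelow (H₀ + V) l : ℝ)) ∧
    ∀ f : ℝ → ℂ, ContDiff ℝ 1 f →
      Trace (fcSA f (H₀ + V) - fcSA f H₀)
        = ∫ l : ℝ, deriv f l *
            (((countBelow H₀ l : ℝ) - (countBelow (H₀ + V) l : ℝ) : ℝ) : ℂ) := by
  have hA : IsSelfAdjoint (H₀ + V) := hH₀.add hV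
  let α := hA.isSymmetric.eigenvalues rfl
  let β := hH₀.isSymmetric.eigenvalues rfl
  have hη : ∀ l, (countBelow H₀ l : ℝ) - countBelow (H₀ + V) l
      = (numBelow β l : ℝ) - numBelow α l := fun l => by
    rw [countBelow_eq_numBelow hH₀ rfl, countBelow_eq_numBelow hA rfl]
  refine ⟨by simpa only [hη] using integrable_numBelow_sub_numBelow α β, fun f hf => ?_⟩
  calc Trace (fcSA f (H₀ + V) - fcSA f H₀) = ∑ i, (f (α i) - f (β i)) := by
        rw [Trace, ContinuousLinearMap.toLinearMap_sub, map_sub, ← Trace, ← Trace,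
          trace_fcSA hA rfl, trace_fcSA hH₀ rfl, Finset.sum_sub_distrib]
    _ = ∫ l, ((numBelow β l : ℝ) - numBelow α l) • deriv f l :=
        (integral_numBelow_sub_numBelow_smul_deriv hf α β).symm
    _ = _ := by simp only [hη, Complex.real_smul, mul_comm]

end
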